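/- Let X' be the Godsil–McKay switch of X = Sp(2ν,2) with respect to the orbit partition {S,T,S_0\(S∪T),S_2,S_4} with cell S. For x ∈ S_2(1,2), y ∈ S_2(1,3), and z = x + y ∈ S_2(2,3), the three vertices x, y, z have exactly one common neighbor in X', namely v_4. -/

import Mathlib

open Finset

abbrev F2 := ZMod 2

/-- Vectors in `F_2^{2ν}`, divided into `ν` blocks of length 2. -/
abbrev Vec (ν : ℕ) := Fin ν → Fin 2 → F2

/-- The symplectic form `x^T K y` with `K = I_ν ⊗ R`, `R = [[0,1],[1,0]]`. -/
def sform {ν : ℕ} (x y : Vec ν) : F2 := ∑ l, (x l 0 * y l 1 + x l 1 * y l 0)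

/-- The vertex set of the symplectic graph `Sp(2ν,2)`: nonzero vectors.
Vertices `x, y` are adjacent iff `sform x y = 1`. -/
abbrev Vtx (ν : ℕ) := {x : Vec ν // x ≠ 0}

/-- The weight of a length-2 block. -/
def wt (b : Fin 2 → F2) : ℕ := (univ.filter (fun c => b c ≠ 0)).card

/-- The number of blocks of `x` having weight `w`. -/
def nblk {ν : ℕ} (x : Vec ν) (w : ℕ) : ℕ := (univ.filter (fun l => wt (x l) = w)).card

/-- `x` belongs to the 4-subset `S = {v_1,v_2,v_3,v_4}`. -/
def inS {ν : ℕ} (v : Fin 4 → Vec ν) (x : Vec ν) : Prop := ∃ i, x = v i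

/-- `x` belongs to `T = {v_1+v_2, v_2+v_3, v_3+v_1}`. -/
def inT {ν : ℕ} (v : Fin 4 → Vec ν) (x : Vec ν) : Prop :=
  ∃ i j : Fin 4, i ≠ 3 ∧ j ≠ 3 ∧ i ≠ j ∧ x = v i + v j

/-- The number of indices `j ∈ [4]` with `x^T K v_j = 1`. -/
def cnt {ν : ℕ} (v : Fin 4 → Vec ν) (x : Vec ν) : ℕ :=
  (univ.filter (fun j : Fin 4 => sform x (v j) = 1)).card

instance {ν : ℕ} (v : Fin 4 → Vec ν) : DecidablePred (inS v) := fun _ =>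
  inferInstanceAs (Decidable (∃ _, _))

instance {ν : ℕ} (v : Fin 4 → Vec ν) : DecidablePred (inT v) := fun _ =>
  inferInstanceAs (Decidable (∃ _, _))

/-- The set `S` as a finset of vertices. -/
def Sfin {ν : ℕ} (v : Fin 4 → Vec ν) : Finset (Vtx ν) := univ.filter (fun x => inS v x.1)

/-- The set `T` as a finset of vertices. -/
def Tfin {ν : ℕ} (v : Fin 4 → Vec ν) : Finset (Vtx ν) := univ.filter (fun x => inT v x.1)

/-- The set `S_i` of vertices `x` with `#{j : x^T K v_j = 1} = i`, as a finset. -/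
def Sifin {ν : ℕ} (v : Fin 4 → Vec ν) (i : ℕ) : Finset (Vtx ν) :=
  univ.filter (fun x => cnt v x.1 = i)

/-- The set `S_0 \ (S ∪ T)` as a finset of vertices. -/
def S0'fin {ν : ℕ} (v : Fin 4 → Vec ν) : Finset (Vtx ν) :=
  univ.filter (fun x => cnt v x.1 = 0 ∧ ¬ inS v x.1 ∧ ¬ inT v x.1)

/-- The number of neighbors of the vertex `x` inside the finset `C`. -/
def nbc {ν : ℕ} (x : Vtx ν) (C : Finset (Vtx ν)) : ℕ :=
  (C.filter (fun y => sform x.1 y.1 = 1)).card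

/-- The standing hypotheses on the special 4-subset `S = {v_1,v_2,v_3,v_4}`:
all `v_i` are vertices, `v_1,v_2,v_3` are linearly independent and pairwise
(and self) `K`-orthogonal, and `v_4 = v_1 + v_2 + v_3`. -/
structure SConfig (ν : ℕ) (v : Fin 4 → Vec ν) : Prop where
  hne : ∀ i, v i ≠ 0
  hind : LinearIndependent F2 ![v 0, v 1, v 2]
  horth : ∀ i j : Fin 4, i ≠ 3 → j ≠ 3 → sform (v i) (v j) = 0
  hsum : v 3 = v 0 + v 1 + v 2

/-- Adjacency in the Godsil–McKay switch `X^S` of `Sp(2ν,2)` with cell `S`: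
adjacency and non-adjacency are interchanged exactly between vertices of `S` and
vertices of `S_2` (the unique cell met by `S`-vertices in exactly half its size). -/
def adjS {ν : ℕ} (v : Fin 4 → Vec ν) (a b : Vec ν) : Prop :=
  Xor' ((inS v a ∧ cnt v b = 2) ∨ (inS v b ∧ cnt v a = 2)) (sform a b = 1)

instance {ν : ℕ} (v : Fin 4 → Vec ν) (a b : Vec ν) : Decidable (adjS v a b) :=
  inferInstanceAs (Decidable ((_ ∧ ¬_) ∨ (_ ∧ ¬_)))

/-!
Every vertex of `S` is orthogonal to all of `S`, so `S` is disjoint from `S_2` and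
`x, y, z ∈ S_2` keep their symplectic adjacency to every vertex outside `S`. Outside `S`
no vertex `w` is adjacent to all three, since `wᵀKz = wᵀKx + wᵀKy`. Inside `S` the
adjacency to `S_2` is complemented, so a common neighbour `v_i` must be orthogonal to
`x` and `y`, which singles out `v_4`.
-/

lemma F2_ne_one_iff (a : F2) : a ≠ 1 ↔ a = 0 := by
  revert a; decide

section SymplecticForm

variable {ν : ℕ}

lemma sform_comm (a b : Vec ν) : sform a b = sform b a :=
  sum_congr rfl fun _ _ => by ring

lemma sform_add_left (a b c : Vec ν) : sform (a + b) c = sform a c + sform b c := by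
  rw [sform, sform, sform, ← sum_add_distrib]
  exact sum_congr rfl fun _ _ => by simp only [Pi.add_apply]; ring

lemma sform_add_right (a b c : Vec ν) : sform a (b + c) = sform a b + sform a c := by
  rw [sform_comm, sform_add_left, sform_comm b, sform_comm c]

lemma sform_zero_left (a : Vec ν) : sform 0 a = 0 := by
  simp [sform]

lemma sform_self (a : Vec ν) : sform a a = 0 :=
  sum_eq_zero fun _ _ => by
    have h : ∀ p q : F2, p * q + q * p = 0 := by decide
    exact h _ _

end SymplecticForm

section Counting

variable {ν : ℕ} {v : Fin 4 → Vec ν} {a : Vec ν} {i j : Fin 4}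

lemma filter_sform_eq_pair (ha : cnt v a = 2) (hi : sform a (v i) = 1)
    (hj : sform a (v j) = 1) (hij : i ≠ j) :
    univ.filter (fun k => sform a (v k) = 1) = {i, j} :=
  (eq_of_subset_of_card_le (by simp [insert_subset_iff, hi, hj])
    (by rw [card_pair hij]; exact ha.le)).symm

lemma sform_eq_zero_of_cnt_eq_two (ha : cnt v a = 2) (hi : sform a (v i) = 1)
    (hj : sform a (v j) = 1) (hij : i ≠ j) {k : Fin 4} (hki : k ≠ i) (hkj : k ≠ j) :
    sform a (v k) = 0 := by
  rw [← F2_ne_one_iff]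
  intro hk
  have hmem : k ∈ univ.filter (fun k => sform a (v k) = 1) := by simp [hk]
  simp [filter_sform_eq_pair ha hi hj hij, hki, hkj] at hmem

lemma cnt_eq_two_of_sform_eq_one_iff (hij : i ≠ j)
    (hk : ∀ k, sform a (v k) = 1 ↔ k = i ∨ k = j) : cnt v a = 2 := by
  have hfilter : univ.filter (fun k => sform a (v k) = 1) = {i, j} := by ext k; simp [hk]
  rw [cnt, hfilter, card_pair hij]

end Counting

section Switching

variable {ν : ℕ} {v : Fin 4 → Vec ν} {a b : Vec ν}

lemma adjS_iff_of_inS (ha : inS v a) (hb : cnt v b = 2) :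
    adjS v a b ↔ sform a b = 0 := by
  have hswap : (inS v a ∧ cnt v b = 2) ∨ (inS v b ∧ cnt v a = 2) := Or.inl ⟨ha, hb⟩
  change Xor _ _ ↔ _
  rw [iff_true_intro hswap, xor_true]
  exact F2_ne_one_iff _

lemma adjS_iff_of_not_inS (ha : ¬ inS v a) (hb : ¬ inS v b) :
    adjS v a b ↔ sform a b = 1 := by
  have hswap : ¬ ((inS v a ∧ cnt v b = 2) ∨ (inS v b ∧ cnt v a = 2)) := by tauto
  change Xor _ _ ↔ _
  rw [iff_false_intro hswap, xor_false, id]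

end Switching

namespace SConfig

variable {ν : ℕ} {v : Fin 4 → Vec ν}

lemma sform_eq_zero (hv : SConfig ν v) (i j : Fin 4) : sform (v i) (v j) = 0 := by
  have h3 : ∀ j : Fin 4, j ≠ 3 → sform (v 3) (v j) = 0 := fun j hj => by
    rw [hv.hsum, sform_add_left, sform_add_left, hv.horth 0 j (by decide) hj,
      hv.horth 1 j (by decide) hj, hv.horth 2 j (by decide) hj, add_zero, add_zero]
  by_cases hi : i = 3 <;> by_cases hj : j = 3
  · subst hi hj; exact sform_self _
  · subst hi; exact h3 j hj
  · subst hj; rw [sform_comm]; exact h3 i hi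
  · exact hv.horth i j hi hj

lemma cnt_eq_zero (hv : SConfig ν v) (i : Fin 4) : cnt v (v i) = 0 := by
  simp [cnt, hv.sform_eq_zero]

lemma not_inS_of_cnt_eq_two (hv : SConfig ν v) {a : Vec ν} (ha : cnt v a = 2) :
    ¬ inS v a := by
  rintro ⟨i, rfl⟩
  simp [hv.cnt_eq_zero] at ha

lemma adjS_common_iff (hv : SConfig ν v) {a b w : Vec ν} (ha : cnt v a = 2)
    (hb : cnt v b = 2) (hab : cnt v (a + b) = 2) :
    (adjS v w a ∧ adjS v w b ∧ adjS v w (a + b)) ↔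
      inS v w ∧ sform w a = 0 ∧ sform w b = 0 := by
  by_cases hw : inS v w
  · rw [adjS_iff_of_inS hw ha, adjS_iff_of_inS hw hb, adjS_iff_of_inS hw hab,
      sform_add_right]
    constructor
    · exact fun ⟨h1, h2, _⟩ => ⟨hw, h1, h2⟩
    · rintro ⟨-, h1, h2⟩
      exact ⟨h1, h2, by rw [h1, h2, add_zero]⟩
  · rw [adjS_iff_of_not_inS hw (hv.not_inS_of_cnt_eq_two ha),
      adjS_iff_of_not_inS hw (hv.not_inS_of_cnt_eq_two hb),
      adjS_iff_of_not_inS hw (hv.not_inS_of_cnt_eq_two hab), sform_add_right]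
    simp only [hw, false_and, iff_false, not_and]
    intro h1 h2
    rw [h1, h2]
    decide

end SConfig

theorem common_nbr_in_XS_general (ν : ℕ) (v : Fin 4 → Vec ν) (hv : SConfig ν v)
    (x y : Vtx ν)
    (hx : cnt v x.1 = 2 ∧ sform x.1 (v 0) = 1 ∧ sform x.1 (v 1) = 1)
    (hy : cnt v y.1 = 2 ∧ sform y.1 (v 0) = 1 ∧ sform y.1 (v 2) = 1) :
    x.1 + y.1 ≠ 0 ∧
    ∀ z : Vtx ν, z.1 = x.1 + y.1 →
      (cnt v z.1 = 2 ∧ sform z.1 (v 1) = 1 ∧ sform z.1 (v 2) = 1) ∧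
      (univ : Finset (Vtx ν)).filter (fun w =>
          w ≠ x ∧ w ≠ y ∧ w ≠ z ∧
          adjS v w.1 x.1 ∧ adjS v w.1 y.1 ∧ adjS v w.1 z.1) =
        ({⟨v 3, hv.hne 3⟩} : Finset (Vtx ν)) := by
  obtain ⟨hxc, hx0, hx1⟩ := hx
  obtain ⟨hyc, hy0, hy2⟩ := hy
  have hx2 := sform_eq_zero_of_cnt_eq_two (k := 2) hxc hx0 hx1 (by decide) (by decide) (by decide)
  have hx3 := sform_eq_zero_of_cnt_eq_two (k := 3) hxc hx0 hx1 (by decide) (by decide) (by decide)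
  have hy1 := sform_eq_zero_of_cnt_eq_two (k := 1) hyc hy0 hy2 (by decide) (by decide) (by decide)
  have hy3 := sform_eq_zero_of_cnt_eq_two (k := 3) hyc hy0 hy2 (by decide) (by decide) (by decide)
  have hxy : ∀ k, sform (x.1 + y.1) (v k) = 1 ↔ k = 1 ∨ k = 2 := by
    intro k
    fin_cases k <;> simp [sform_add_left, hx0, hx1, hx2, hx3, hy0, hy1, hy2, hy3]
  have hxyc : cnt v (x.1 + y.1) = 2 := cnt_eq_two_of_sform_eq_one_iff (by decide) hxy
  refine ⟨fun h => by simpa [h, sform_zero_left] using hxy 1, fun z hz => ?_⟩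
  refine ⟨hz ▸ ⟨hxyc, (hxy 1).2 (by simp), (hxy 2).2 (by simp)⟩, ?_⟩
  have hv3 : ∀ u : Vtx ν, cnt v u.1 = 2 → u ≠ ⟨v 3, hv.hne 3⟩ := fun u hu h =>
    hv.not_inS_of_cnt_eq_two hu ⟨3, congrArg Subtype.val h⟩
  ext w
  rw [mem_filter, mem_singleton, hz, hv.adjS_common_iff hxc hyc hxyc]
  simp only [mem_univ, true_and]
  constructor
  · rintro ⟨-, -, -, ⟨i, hi⟩, hwx, hwy⟩
    rw [hi, sform_comm] at hwx hwy
    fin_cases i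
    · simp [hx0] at hwx
    · simp [hx1] at hwx
    · simp [hy2] at hwy
    · exact Subtype.ext hi
  · rintro rfl
    refine ⟨(hv3 x hxc).symm, (hv3 y hyc).symm, (hv3 z (hz ▸ hxyc)).symm, ⟨3, rfl⟩, ?_, ?_⟩
    · rw [sform_comm, hx3]
    · rw [sform_comm, hy3]

/-- In the switched graph `X^S`, for `x ∈ S_2(1,2)`, `y ∈ S_2(1,3)` and `z = x + y`,
we have `z ∈ S_2(2,3)` and the unique common neighbor of `x, y, z` is `v_4`. -/
theorem common_nbr_in_XS (ν : ℕ) (hν : 3 ≤ ν) (v : Fin 4 → Vec ν) (hv : SConfig ν v)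
    (x y : Vtx ν)
    (hx : cnt v x.1 = 2 ∧ sform x.1 (v 0) = 1 ∧ sform x.1 (v 1) = 1)
    (hy : cnt v y.1 = 2 ∧ sform y.1 (v 0) = 1 ∧ sform y.1 (v 2) = 1) :
    x.1 + y.1 ≠ 0 ∧
    ∀ z : Vtx ν, z.1 = x.1 + y.1 →
      (cnt v z.1 = 2 ∧ sform z.1 (v 1) = 1 ∧ sform z.1 (v 2) = 1) ∧
      (univ : Finset (Vtx ν)).filter (fun w =>
          w ≠ x ∧ w ≠ y ∧ w ≠ z ∧
          adjS v w.1 x.1 ∧ adjS v w.1 y.1 ∧ adjS v w.1 z.1) =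
        ({⟨v 3, hv.hne 3⟩} : Finset (Vtx ν)) :=
  common_nbr_in_XS_general ν v hv x y hx hy
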